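/- arXiv:1912.01639 — 2 statements merged into one kernel-verified Lean document; each statement's English description precedes it below -/
import Mathlib

section
/- Let P be a finite set of points in ℝ^d, let k be an integer with 1 ≤ k ≤ |P|, and let B be a nonempty compact convex subset of ℝ^d (for instance, a closed Euclidean ball). Then B intersects the convex hull of every k-element subset of P if and only if every open halfspace of ℝ^d that is disjoint from B contains fewer than k points of P. -/
open scoped Classical

/-! A halfspace containing `k` points of `P` contains their convex hull, so if it misses `B` then
so does that hull. Conversely, if `B` misses `conv Q`, strict Hahn–Banach separation of the
compact convex set `conv Q` from the closed convex set `B` gives an open halfspace containing `Q`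
and disjoint from `B`; it is a genuine halfspace (`a ≠ 0`) because it is nonempty and misses the
nonempty set `B`. -/

section Halfspace

variable {E : Type*} [NormedAddCommGroup E] [InnerProductSpace ℝ E]

theorem card_filter_lt_of_forall_inter_convexHull_nonempty {P : Finset E} {k : ℕ} {B H : Set E}
    [DecidablePred (· ∈ H)] (hH : Convex ℝ H) (hBH : Disjoint B H)
    (hP : ∀ Q ⊆ P, Q.card = k → (B ∩ convexHull ℝ (Q : Set E)).Nonempty) :
    (P.filter (· ∈ H)).card < k := by
  by_contra! hle
  obtain ⟨Q, hQH, hQk⟩ := Finset.exists_subset_card_eq hle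
  obtain ⟨x, hxB, hxQ⟩ := hP Q (hQH.trans (P.filter_subset _)) hQk
  have hQH' : (Q : Set E) ⊆ H := fun q hq => (Finset.mem_filter.mp (hQH hq)).2
  exact hBH.ne_of_mem hxB (convexHull_min hQH' hH hxQ) rfl

theorem exists_halfspace_superset_disjoint [CompleteSpace E] {K B : Set E} (hKconv : Convex ℝ K)
    (hKcompact : IsCompact K) (hBconv : Convex ℝ B) (hBclosed : IsClosed B) (hKB : Disjoint K B) :
    ∃ (a : E) (b : ℝ), K ⊆ {x | inner ℝ a x < b} ∧ Disjoint B {x | inner ℝ a x < b} := by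
  obtain ⟨f, u, v, hfK, huv, hfB⟩ :=
    geometric_hahn_banach_compact_closed hKconv hKcompact hBconv hBclosed hKB
  set a := (InnerProductSpace.toDual ℝ E).symm f
  have hinner : ∀ x, inner ℝ a x = f x := fun x => InnerProductSpace.toDual_symm_apply
  refine ⟨a, u, fun x hx => ?_, Set.disjoint_left.mpr fun x hxB hxH => ?_⟩
  · simpa only [Set.mem_ofPred_eq, hinner] using hfK x hx
  · rw [Set.mem_ofPred_eq, hinner] at hxH
    linarith [hfB x hxB]

theorem ne_zero_of_disjoint_halfspace {B : Set E} {a q : E} {b : ℝ} (hB : B.Nonempty)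
    (hBH : Disjoint B {x | inner ℝ a x < b}) (hq : inner ℝ a q < b) : a ≠ 0 := by
  rintro rfl
  obtain ⟨y, hy⟩ := hB
  rw [inner_zero_left] at hq
  exact hBH.ne_of_mem hy (show inner ℝ 0 y < b by rwa [inner_zero_left]) rfl

end Halfspace

theorem stmt_6_general (d : ℕ) (P : Finset (EuclideanSpace ℝ (Fin d))) (k : ℕ)
    (hk₁ : 1 ≤ k)
    (B : Set (EuclideanSpace ℝ (Fin d)))
    (hBne : B.Nonempty) (hBcompact : IsCompact B) (hBconvex : Convex ℝ B) :
    (∀ Q ⊆ P, Q.card = k →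
        (B ∩ convexHull ℝ (Q : Set (EuclideanSpace ℝ (Fin d)))).Nonempty) ↔
      (∀ (a : EuclideanSpace ℝ (Fin d)) (b : ℝ), a ≠ 0 →
        Disjoint B {x : EuclideanSpace ℝ (Fin d) | (inner ℝ a x : ℝ) < b} →
        (P.filter fun x => (inner ℝ a x : ℝ) < b).card < k) := by
  refine ⟨fun h a b _ hBH =>
    card_filter_lt_of_forall_inter_convexHull_nonempty
      (convex_halfSpace_lt (innerₛₗ ℝ a).isLinear b) hBH h, fun h Q hQP hQk => ?_⟩
  by_contra hBQ
  obtain ⟨a, b, hQH, hBH⟩ := exists_halfspace_superset_disjoint (convex_convexHull ℝ _)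
    (Q.finite_toSet.isCompact_convexHull ℝ) hBconvex hBcompact.isClosed
    (Set.disjoint_left.mpr fun x hxQ hxB => hBQ ⟨x, hxB, hxQ⟩)
  have hQH' : Q ⊆ P.filter fun x => inner ℝ a x < b := fun x hx =>
    Finset.mem_filter.mpr ⟨hQP hx, hQH (subset_convexHull ℝ _ hx)⟩
  obtain ⟨q, hq⟩ := Finset.card_pos.mp (hQk ▸ hk₁)
  have hk := h a b (ne_zero_of_disjoint_halfspace hBne hBH (hQH (subset_convexHull ℝ _ hq))) hBH
  exact absurd (Finset.card_le_card hQH') (by omega)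

/-- Let `P` be a finite set of points in `ℝ^d`, `1 ≤ k ≤ |P|`, and let `B` be
a nonempty compact convex subset of `ℝ^d`.  Then `B` intersects the convex
hull of every `k`-element subset of `P` iff every open halfspace
`{x : ⟪a,x⟫ < b}` (`a ≠ 0`) disjoint from `B` contains fewer than `k`
points of `P`. -/
theorem stmt_6 (d : ℕ) (P : Finset (EuclideanSpace ℝ (Fin d))) (k : ℕ)
    (hk₁ : 1 ≤ k) (hk₂ : k ≤ P.card)
    (B : Set (EuclideanSpace ℝ (Fin d)))
    (hBne : B.Nonempty) (hBcompact : IsCompact B) (hBconvex : Convex ℝ B) :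
    (∀ Q ⊆ P, Q.card = k →
        (B ∩ convexHull ℝ (Q : Set (EuclideanSpace ℝ (Fin d)))).Nonempty) ↔
      (∀ (a : EuclideanSpace ℝ (Fin d)) (b : ℝ), a ≠ 0 →
        Disjoint B {x : EuclideanSpace ℝ (Fin d) | (inner ℝ a x : ℝ) < b} →
        (P.filter fun x => (inner ℝ a x : ℝ) < b).card < k) :=
  stmt_6_general d P k hk₁ B hBne hBcompact hBconvex
end

section
/- Let C be a type and let f : Finset C → ℝ ∪ {−∞, +∞} satisfy monotonicity (A ⊆ B implies f(A) ≤ f(B)) and locality (for all A ⊆ B with f(A) = f(B) > −∞ and all s ∈ C, f(B) < f(B ∪ {s}) if and only if f(A) < f(A ∪ {s})). Define the batched objective F on finite families 𝒜 of finite subsets of C by F(𝒜) = f(⋃ 𝒜). Then: (1) F satisfies monotonicity; (2) F satisfies locality (with a constraint being a finite subset of C, and 𝒜 ∪ {S} in place of A ∪ {s}); and (3) if every finite A ⊆ C contains a subset B with f(B) = f(A) and |B| ≤ δ, then every finite family 𝒜 of finite subsets of C contains a subfamily ℬ ⊆ 𝒜 with F(ℬ) = F(𝒜) and |ℬ| ≤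 δ. -/
/-- The batched LP-type problem is again an LP-type problem with the same
combinatorial dimension.  Here `f : Finset C → EReal` (with `EReal` modelling
`ℝ ∪ {−∞, +∞}`) satisfies monotonicity and locality, and the batched
objective on a finite family `𝒜` of finite subsets of `C` is
`F 𝒜 = f (⋃ 𝒜)` (the union being `𝒜.sup id`).  Then:
(1) `F` is monotone; (2) `F` satisfies locality; (3) if every finite `A ⊆ C`
has a subset `B` with `f B = f A` and `|B| ≤ δ`, then every finite family `𝒜`
has a subfamily `ℬ ⊆ 𝒜` with `F ℬ = F 𝒜` and `|ℬ| ≤ δ`. -/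
theorem stmt_9 (C : Type*) [DecidableEq C] (f : Finset C → EReal)
    (hmono : ∀ A B : Finset C, A ⊆ B → f A ≤ f B)
    (hloc : ∀ A B : Finset C, A ⊆ B → f B = f A → ⊥ < f A →
      ∀ s : C, (f B < f (insert s B) ↔ f A < f (insert s A)))
    (δ : ℕ)
    (F : Finset (Finset C) → EReal)
    (hF : ∀ 𝒜 : Finset (Finset C), F 𝒜 = f (𝒜.sup id)) :
    (∀ 𝒜 ℬ : Finset (Finset C), 𝒜 ⊆ ℬ → F 𝒜 ≤ F ℬ) ∧
    (∀ 𝒜 ℬ : Finset (Finset C), 𝒜 ⊆ ℬ → F ℬ = F 𝒜 → ⊥ < F 𝒜 →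
      ∀ S : Finset C, (F ℬ < F (insert S ℬ) ↔ F 𝒜 < F (insert S 𝒜))) ∧
    ((∀ A : Finset C, ∃ B ⊆ A, f B = f A ∧ B.card ≤ δ) →
      ∀ 𝒜 : Finset (Finset C), ∃ ℬ ⊆ 𝒜, F ℬ = F 𝒜 ∧ ℬ.card ≤ δ) := by
  have key : ∀ S A B : Finset C, A ⊆ B → f B = f A → ⊥ < f A →
      (f (A ∪ S) = f A ↔ f (B ∪ S) = f B) := by
    intro S
    induction S using Finset.induction_on with
    | empty => intro A B _ hBA _; simp [hBA]
    | @insert s S' hs ih =>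
      intro A B hsub hBA hbot
      have eqA : A ∪ insert s S' = insert s A ∪ S' := by
        rw [Finset.union_insert, Finset.insert_union]
      have eqB : B ∪ insert s S' = insert s B ∪ S' := by
        rw [Finset.union_insert, Finset.insert_union]
      constructor
      · intro h
        have hAs : f (insert s A) = f A := by
          refine le_antisymm ?_ (hmono _ _ (Finset.subset_insert _ _))
          calc f (insert s A) ≤ f (A ∪ insert s S') := by
                refine hmono _ _ ?_
                intro x hx
                simp only [Finset.mem_insert, Finset.mem_union] at hx ⊢
                tauto
            _ = f A := h
        have hBs : f (insert s B) = f B := by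
          refine le_antisymm (not_lt.mp ?_) (hmono _ _ (Finset.subset_insert _ _))
          rw [hloc A B hsub hBA hbot s, hAs]
          exact lt_irrefl _
        have hsub' : insert s A ⊆ insert s B := Finset.insert_subset_insert _ hsub
        have heq' : f (insert s B) = f (insert s A) := by rw [hBs, hAs, hBA]
        have hbot' : ⊥ < f (insert s A) := by rw [hAs]; exact hbot
        have := (ih (insert s A) (insert s B) hsub' heq' hbot').mp
          (by rw [← eqA, h, hAs])
        rw [eqB, this, hBs]
      · intro h
        have hBs : f (insert s B) = f B := by
          refine le_antisymm ?_ (hmono _ _ (Finset.subset_insert _ _))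
          calc f (insert s B) ≤ f (B ∪ insert s S') := by
                refine hmono _ _ ?_
                intro x hx
                simp only [Finset.mem_insert, Finset.mem_union] at hx ⊢
                tauto
            _ = f B := h
        have hAs : f (insert s A) = f A := by
          refine le_antisymm (not_lt.mp ?_) (hmono _ _ (Finset.subset_insert _ _))
          rw [← hloc A B hsub hBA hbot s, hBs]
          exact lt_irrefl _
        have hsub' : insert s A ⊆ insert s B := Finset.insert_subset_insert _ hsub
        have heq' : f (insert s B) = f (insert s A) := by rw [hBs, hAs, hBA]
        have hbot' : ⊥ < f (insert s A) := by rw [hAs]; exact hbot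
        have := (ih (insert s A) (insert s B) hsub' heq' hbot').mpr
          (by rw [← eqB, h, hBs])
        rw [eqA, this, hAs]
  refine ⟨?_, ?_, ?_⟩
  · intro 𝒜 ℬ hsub
    rw [hF, hF]
    exact hmono _ _ (Finset.sup_mono hsub)
  · intro 𝒜 ℬ hsub hBA hbot S
    rw [hF, hF, hF, hF] at *
    have hsupsub : 𝒜.sup id ⊆ ℬ.sup id := Finset.sup_mono hsub
    have hins : ∀ 𝒞 : Finset (Finset C), (insert S 𝒞).sup id = 𝒞.sup id ∪ S := by
      intro 𝒞
      rw [Finset.sup_insert]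
      simp [Finset.sup_eq_union, Finset.union_comm]
    rw [hins, hins]
    have hk := key S (𝒜.sup id) (ℬ.sup id) hsupsub hBA hbot
    constructor
    · intro hlt
      refine lt_of_le_of_ne (hmono _ _ Finset.subset_union_left) ?_
      intro he
      exact hlt.ne' (hk.mp he.symm)
    · intro hlt
      refine lt_of_le_of_ne (hmono _ _ Finset.subset_union_left) ?_
      intro he
      exact hlt.ne' (hk.mpr he.symm)
  · intro hbasis 𝒜
    obtain ⟨B, hBsub, hBf, hBcard⟩ := hbasis (𝒜.sup id)
    have hex : ∀ b ∈ B, ∃ A ∈ 𝒜, b ∈ A := by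
      intro b hb
      have := hBsub hb
      rwa [Finset.mem_sup] at this
    classical
    choose g hg1 hg2 using hex
    refine ⟨B.attach.image (fun b => g b.1 b.2), ?_, ?_, ?_⟩
    · intro X hX
      simp only [Finset.mem_image, Finset.mem_attach, true_and, Subtype.exists] at hX
      obtain ⟨b, hb, rfl⟩ := hX
      exact hg1 b hb
    · rw [hF, hF]
      refine le_antisymm (hmono _ _ (Finset.sup_mono ?_)) ?_
      · intro X hX
        simp only [Finset.mem_image, Finset.mem_attach, true_and, Subtype.exists] at hX
        obtain ⟨b, hb, rfl⟩ := hX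
        exact hg1 b hb
      · rw [← hBf]
        refine hmono _ _ ?_
        intro b hb
        rw [Finset.mem_sup]
        refine ⟨g b hb, ?_, hg2 b hb⟩
        simp only [Finset.mem_image, Finset.mem_attach, true_and, Subtype.exists]
        exact ⟨b, hb, rfl⟩
    · calc (B.attach.image (fun b => g b.1 b.2)).card ≤ B.attach.card :=
            Finset.card_image_le
        _ = B.card := Finset.card_attach
        _ ≤ δ := hBcard
end
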